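/- Suppose ⟨S_α : α < ω₁⟩ is a family of stationary subsets of ω₁ such that for every stationary T ⊆ ω₁ there exists α < ω₁ and a club C ⊆ ω₁ with S_α ∩ C ⊆ T (i.e. the family is dense in NS_{ω₁}⁺ modulo clubs). Then for any T ⊆ ω₁: T is stationary if and only if there exists a club C ⊆ ω₁ and an α < ω₁ with C ∩ S_α ⊆ T. In particular, stationarity of subsets of ω₁ is characterized by a Σ₁ condition over (P(ω₁), ⟨S_α⟩). -/

import Mathlib

open Set

noncomputable section

/-- The first uncountable ordinal `ω₁`. -/
def omega1 : Ordinal := (Cardinal.aleph 1).ord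

/-- `C` is a club (closed unbounded) subset of `ω₁`. -/
def IsClubOmega1 (C : Set Ordinal) : Prop :=
  C ⊆ Set.Iio omega1 ∧
  (∀ o < omega1, ∃ c ∈ C, o < c) ∧
  (∀ s : Set Ordinal, s ⊆ C → s.Nonempty → sSup s < omega1 → sSup s ∈ C)

/-- `S` is a stationary subset of `ω₁`. -/
def IsStationaryOmega1 (S : Set Ordinal) : Prop :=
  S ⊆ Set.Iio omega1 ∧ ∀ C : Set Ordinal, IsClubOmega1 C → (S ∩ C).Nonempty

/-- Finite partial functions `ω ⇀ ω₁`, coded as functional finsets of pairs with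
values below `ω₁`. -/
def IsCond (p : Finset (ℕ × Ordinal)) : Prop :=
  (∀ x ∈ p, x.2 < omega1) ∧ ∀ x ∈ p, ∀ y ∈ p, x.1 = y.1 → x.2 = y.2

/-- The forcing `Col(ω,ω₁)`. -/
def Col : Type _ := {p : Finset (ℕ × Ordinal) // IsCond p}

/-- `p ≤ q` iff `p` extends `q`. -/
instance : LE Col := ⟨fun p q => q.1 ⊆ p.1⟩

/-- Two conditions are compatible iff they have a common extension. -/
def Col.Compatible (p q : Col) : Prop := ∃ r : Col, r ≤ p ∧ r ≤ q

/-- `Col(ω,ω₁) ∩ α`: conditions with range contained in `α`. -/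
def colBelow (α : Ordinal) : Set Col := {p | ∀ x ∈ p.1, x.2 < α}

/-- `F` is a filter on the suborder `B` of `Col(ω,ω₁)` (the empty set counts as a
filter): upward closed within `B` and directed. -/
def IsColFilter (B F : Set Col) : Prop :=
  F ⊆ B ∧ (∀ p ∈ F, ∀ q ∈ B, p ≤ q → q ∈ F) ∧
  ∀ p ∈ F, ∀ q ∈ F, ∃ r ∈ F, r ≤ p ∧ r ≤ q

/-- `f` guesses `Col(ω,ω₁)`-filters. -/
def Guesses (f : Ordinal → Set Col) : Prop :=
  ∀ α < omega1, IsColFilter (colBelow α) (f α)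

/-- `S^f_b = {α < ω₁ : b ∈ f(α)}`. -/
def Sfb (f : Ordinal → Set Col) (b : Col) : Set Ordinal :=
  {α | α < omega1 ∧ b ∈ f α}

/-- `D` is dense in `Col(ω,ω₁)`. -/
def ColDense (D : Set Col) : Prop := ∀ p : Col, ∃ q ∈ D, q ≤ p

/-- `S ⊆ ω₁` is `f`-stationary. -/
def fStationary (f : Ordinal → Set Col) (S : Set Ordinal) : Prop :=
  S ⊆ Set.Iio omega1 ∧
  ∀ D : Ordinal → Set Col, (∀ β < omega1, ColDense (D β)) →
    IsStationaryOmega1 {α | α ∈ S ∧ ∀ β < α, (f α ∩ D β).Nonempty}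

/-- `f` witnesses `◇(ω₁^{<ω})`. -/
def WitnessesDiamond (f : Ordinal → Set Col) : Prop :=
  Guesses f ∧ ∀ b : Col, fStationary f (Sfb f b)

lemma club_inter {C D : Set Ordinal} (hC : IsClubOmega1 C) (hD : IsClubOmega1 D) : IsClubOmega1 (C ∩ D) := by
  obtain ⟨hC1, hC2, hC3⟩ := hC
  obtain ⟨hD1, hD2, hD3⟩ := hD
  refine ⟨fun x hx => hC1 hx.1, ?_, ?_⟩
  · intro o ho
    set nC : Ordinal → Ordinal := fun x => if h : x < omega1 then (hC2 x h).choose else 0 with hnCdef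
    set nD : Ordinal → Ordinal := fun x => if h : x < omega1 then (hD2 x h).choose else 0 with hnDdef
    have hnC : ∀ x, x < omega1 → nC x ∈ C ∧ x < nC x := by
      intro x hx
      simp only [hnCdef, dif_pos hx]
      exact ⟨(hC2 x hx).choose_spec.1, (hC2 x hx).choose_spec.2⟩
    have hnD : ∀ x, x < omega1 → nD x ∈ D ∧ x < nD x := by
      intro x hx
      simp only [hnDdef, dif_pos hx]
      exact ⟨(hD2 x hx).choose_spec.1, (hD2 x hx).choose_spec.2⟩
    set g : ℕ → Ordinal := fun n => Nat.rec (nC o) (fun _ ih => nC (nD ih)) n with hgdef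
    have hg0 : g 0 = nC o := rfl
    have hgs : ∀ n, g (n + 1) = nC (nD (g n)) := fun n => rfl
    have hgC : ∀ n, g n ∈ C := by
      intro n
      induction n with
      | zero => exact (hnC o ho).1
      | succ n ih =>
        rw [hgs]
        exact (hnC _ (hD1 (hnD _ (hC1 ih)).1)).1
    have hglt : ∀ n, g n < omega1 := fun n => hC1 (hgC n)
    have hgD : ∀ n, nD (g n) ∈ D := fun n => (hnD _ (hglt n)).1
    have hgDlt : ∀ n, nD (g n) < omega1 := fun n => hD1 (hgD n)
    have hlt1 : ∀ n, g n < nD (g n) := fun n => (hnD _ (hglt n)).2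
    have hlt2 : ∀ n, nD (g n) < g (n + 1) := by
      intro n; rw [hgs]; exact (hnC _ (hgDlt n)).2
    set lam : Ordinal := sSup (Set.range g) with hlam
    have hlamlt : lam < omega1 := by
      have := Cardinal.isRegular_aleph_one
      have h2 : Cardinal.lift (Cardinal.mk ℕ) < Cardinal.aleph 1 := by
        simpa [Cardinal.mk_nat] using Cardinal.aleph0_lt_aleph_one
      exact Cardinal.iSup_lt_ord_lift_of_isRegular this h2 hglt
    have hbddg : BddAbove (Set.range g) := Ordinal.bddAbove_range g
    have hbddD : BddAbove (Set.range fun n => nD (g n)) := Ordinal.bddAbove_range _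
    have hsupeq : sSup (Set.range fun n => nD (g n)) = lam := by
      apply le_antisymm
      · apply csSup_le ⟨_, Set.mem_range_self 0⟩
        rintro a ⟨n, rfl⟩
        exact le_trans (hlt2 n).le (le_csSup hbddg (Set.mem_range_self (n + 1)))
      · apply csSup_le ⟨_, Set.mem_range_self 0⟩
        rintro a ⟨n, rfl⟩
        exact le_trans (hlt1 n).le (le_csSup hbddD (Set.mem_range_self n))
    have hlamC : lam ∈ C :=
      hC3 _ (Set.range_subset_iff.2 hgC) ⟨_, Set.mem_range_self 0⟩ hlamlt
    have hlamD : lam ∈ D := by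
      rw [← hsupeq]
      exact hD3 _ (Set.range_subset_iff.2 hgD) ⟨_, Set.mem_range_self 0⟩
        (hsupeq ▸ hlamlt)
    refine ⟨lam, ⟨hlamC, hlamD⟩, lt_of_lt_of_le (hnC o ho).2 ?_⟩
    exact le_csSup hbddg (Set.mem_range_self 0)
  · intro s hs hne hlt
    exact ⟨hC3 s (fun x hx => (hs hx).1) hne hlt, hD3 s (fun x hx => (hs hx).2) hne hlt⟩

/-- If `⟨S_α : α < ω₁⟩` witnesses that `NS_{ω₁}` is `ω₁`-dense, then
stationarity of `T ⊆ ω₁` is equivalent to the Σ₁ condition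
"some `C ∩ S_α` with `C` club is contained in `T`". -/
theorem dense_family_characterizes_stationarity (S : Ordinal → Set Ordinal)
    (hstat : ∀ α < omega1, IsStationaryOmega1 (S α))
    (hdense : ∀ T ⊆ Set.Iio omega1, IsStationaryOmega1 T →
      ∃ α < omega1, ∃ C : Set Ordinal, IsClubOmega1 C ∧ S α ∩ C ⊆ T) :
    ∀ T ⊆ Set.Iio omega1,
      (IsStationaryOmega1 T ↔ ∃ C : Set Ordinal, IsClubOmega1 C ∧ ∃ α < omega1, C ∩ S α ⊆ T) := by

  intro T hT
  constructor
  · intro hTstat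
    obtain ⟨α, hα, C, hCclub, hsub⟩ := hdense T hT hTstat
    exact ⟨C, hCclub, α, hα, fun x hx => hsub ⟨hx.2, hx.1⟩⟩
  · rintro ⟨C, hCclub, α, hα, hsub⟩
    refine ⟨hT, fun E hEclub => ?_⟩
    obtain ⟨x, hxS, hxC, hxE⟩ := (hstat α hα).2 (C ∩ E) (club_inter hCclub hEclub)
    exact ⟨x, hsub ⟨hxC, hxS⟩, hxE⟩
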